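/- arXiv:1509.06357 — 2 statements merged into one kernel-verified Lean document; each statement's English description precedes it below -/
import Mathlib

section
/- (Introduce rule.) Let k ≥ 1 and let (G,T) be a terminal graph obtained from (G−v, T∖{v}) by introducing v, i.e., T ≠ V(G), v ∈ T, and every neighbor of v in G lies in T. Let (H,ℓ) = C^c_k(G−v, T∖{v}). Define a labeled graph (H',ℓ') as follows: for every node x of H and every color c ∈ {1,…,k}, if the unique function δ : T → {1,…,k} with δ(v) = c and δ restricted to T∖{v} equal to ℓ(x) is a proper k-coloring of G[T], then H' has a node x_c with label ℓ'(x_c) = δ; two distinct nodes x_c and y_d of H' are adjacent if and only if (1) x = y, or (2) xy is an edge of H and c = d. Then (H',ℓ') = C^c_k(G,T). Moreover, for every k-coloring γ of G, if x is the node of H whose label component contains the restriction of γ to V(G)∖{v}, and c = γ(v), then x_c is the γ-node of C^c_k(G,T). -/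
open SimpleGraph

/-- A proper `k`-coloring of a graph. -/
def IsColoring {W : Type*} (G : SimpleGraph W) (k : ℕ) (α : W → Fin k) : Prop :=
  ∀ u v : W, G.Adj u v → α u ≠ α v

/-- The `k`-color graph `C_k(G)`: nodes are proper `k`-colorings of `G`,
two colorings being adjacent iff they differ on exactly one vertex. -/
def colorGraph {W : Type*} (G : SimpleGraph W) (k : ℕ) :
    SimpleGraph {α : W → Fin k // IsColoring G k α} where
  Adj α β := ∃! w, α.1 w ≠ β.1 w
  symm := ⟨by
    rintro α β ⟨w, hw, hu⟩
    exact ⟨w, hw.symm, fun u hu' => hu u hu'.symm⟩⟩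
  loopless := ⟨by
    rintro α ⟨w, hw, -⟩
    exact hw rfl⟩

/-- The subgraph of a labeled graph consisting of the edges between
equally labeled nodes. -/
def sameLabelSub {N L : Type*} (H : SimpleGraph N) (f : N → L) : SimpleGraph N where
  Adj x y := H.Adj x y ∧ f x = f y
  symm := ⟨fun _ _ h => ⟨h.1.symm, h.2.symm⟩⟩
  loopless := ⟨fun x h => H.irrefl h.1⟩

/-- The quotient graph obtained from a labeled graph by contracting every
(maximal) connected set of equally labeled nodes (i.e. every label component)
into a single node. -/
def quotGraph {N L : Type*} (H : SimpleGraph N) (f : N → L) :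
    SimpleGraph (sameLabelSub H f).ConnectedComponent where
  Adj c d := c ≠ d ∧ ∃ a b, (sameLabelSub H f).connectedComponentMk a = c ∧
      (sameLabelSub H f).connectedComponentMk b = d ∧ H.Adj a b
  symm := ⟨by
    rintro c d ⟨hne, a, b, ha, hb, hab⟩
    exact ⟨hne.symm, b, a, hb, ha, hab.symm⟩⟩
  loopless := ⟨fun c h => h.1 rfl⟩

/-- The common label of a label component. -/
def quotLabel {N L : Type*} (H : SimpleGraph N) (f : N → L) :
    (sameLabelSub H f).ConnectedComponent → L :=
  SimpleGraph.ConnectedComponent.lift f (by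
    intro v w p hp
    clear hp
    induction p with
    | nil => rfl
    | cons h _ ih => exact (show H.Adj _ _ ∧ f _ = f _ from h).2.trans ih)

/-- The label of a coloring: its restriction to the terminal set `T`. -/
def csgLabelFun {W : Type*} (G : SimpleGraph W) (k : ℕ) (T : Set W) :
    {α : W → Fin k // IsColoring G k α} → (T → Fin k) :=
  fun α t => α.1 t.1

/-- The node set of the contracted solution graph: the label components. -/
abbrev CSGNode {W : Type*} (G : SimpleGraph W) (k : ℕ) (T : Set W) :=
  (sameLabelSub (colorGraph G k) (csgLabelFun G k T)).ConnectedComponent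

/-- The contracted solution graph `C^c_k(G,T)`. -/
def CSG {W : Type*} (G : SimpleGraph W) (k : ℕ) (T : Set W) : SimpleGraph (CSGNode G k T) :=
  quotGraph (colorGraph G k) (csgLabelFun G k T)

/-- The `γ`-node of the contracted solution graph: the label component containing `γ`. -/
def csgNode {W : Type*} (G : SimpleGraph W) (k : ℕ) (T : Set W)
    (γ : {α : W → Fin k // IsColoring G k α}) : CSGNode G k T :=
  (sameLabelSub (colorGraph G k) (csgLabelFun G k T)).connectedComponentMk γ

/-- The label of a node of the contracted solution graph: the common restriction
to `T` of its colorings. -/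
def csgLabel {W : Type*} (G : SimpleGraph W) (k : ℕ) (T : Set W) :
    CSGNode G k T → (T → Fin k) :=
  quotLabel (colorGraph G k) (csgLabelFun G k T)

/-- The restriction of a proper coloring to an induced subgraph. -/
def restrictColoring {W : Type*} (G : SimpleGraph W) (k : ℕ) (S : Set W)
    (γ : {α : W → Fin k // IsColoring G k α}) :
    {α : S → Fin k // IsColoring (G.induce S) k α} :=
  ⟨fun u => γ.1 u.1, fun u w h => γ.2 u.1 w.1 h⟩

/-- A graph is chordal if it contains no induced cycle of length greater than 3. -/
def Chordal {W : Type*} (G : SimpleGraph W) : Prop :=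
  ∀ n : ℕ, 4 ≤ n → IsEmpty (SimpleGraph.cycleGraph n ↪g G)

/-- `S` is a vertex cut: `G - S` is disconnected. -/
def IsVertexCut {W : Type*} (G : SimpleGraph W) (S : Set W) : Prop :=
  ¬ (G.induce Sᶜ).Preconnected

/-- `G` is `l`-connected. -/
def LConnected {W : Type*} (G : SimpleGraph W) (l : ℕ) : Prop :=
  G.Connected ∧ l + 1 ≤ Nat.card W ∧ ∀ S : Set W, IsVertexCut G S → l ≤ S.ncard

/-- A labeled graph `(H,ℓ)`, whose labels are `k`-colorings of the complete graph
on a vertex (type) `S`, is an `(|S|,k)`-color-complete graph. -/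
def IsColorComplete {N S : Type*} (k : ℕ) (H : SimpleGraph N) (ℓ : N → S → Fin k) : Prop :=
  (∀ x, Function.Injective (ℓ x)) ∧
  (∀ f : S → Fin k, Function.Injective f → ∃! x, ℓ x = f) ∧
  (∀ x y, H.Adj x y ↔ ∃! s, ℓ x s ≠ ℓ y s)

/-- The injective neighborhood property. -/
def INP {N L : Type*} (H : SimpleGraph N) (ℓ : N → L) : Prop :=
  ∀ u v w : N, H.Adj u v → H.Adj u w → v ≠ w → ℓ v ≠ ℓ w

/-- The weight `w(P)` of a walk `P` in a labeled graph: the sum over the vertices `x`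
of `P` of the number of colors used by labels of neighbors of `x` in `P` but not by
the label of `x`. -/
noncomputable def walkWeight {N S : Type*} {k : ℕ} {G : SimpleGraph N} (ℓ : N → S → Fin k)
    {a b : N} (P : G.Walk a b) : ℕ :=
  letI := Classical.decEq N
  ∑ x ∈ P.support.toFinset,
    ((⋃ y ∈ P.toSubgraph.neighborSet x, Set.range (ℓ y)) \ Set.range (ℓ x)).ncard

/-- The vertex set of `G - v`. -/
def delSet {V : Type*} (v : V) : Set V := {u | u ≠ v}

/-- The terminal set `T \ {v}`, viewed as a set of vertices of `G - v`. -/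
def Tdel {V : Type*} (T : Set V) (v : V) : Set ↥(delSet v) := {u | u.1 ∈ T}

/-- The extension of a `k`-coloring `f` of `G[T \ {v}]` by assigning color `c` to `v`. -/
def extLabel {V : Type*} [DecidableEq V] (T : Set V) (v : V) {k : ℕ} (c : Fin k)
    (f : ↥(Tdel T v) → Fin k) : ↥T → Fin k :=
  fun t => if h : t.1 = v then c else f ⟨⟨t.1, h⟩, t.2⟩

/-- The node set of the graph constructed in the introduce rule: pairs of a node `x`
of `C^c_k(G-v, T \ {v})` and a color `c` whose corresponding extended label is a
proper `k`-coloring of `G[T]`. -/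
def IntroNode {V : Type*} [DecidableEq V] (G : SimpleGraph V) (k : ℕ) (T : Set V) (v : V) :=
  {p : CSGNode (G.induce (delSet v)) k (Tdel T v) × Fin k //
    IsColoring (G.induce T) k
      (extLabel T v p.2 (csgLabel (G.induce (delSet v)) k (Tdel T v) p.1))}

/-- The graph constructed in the introduce rule: two distinct nodes `x_c` and `y_d`
are adjacent iff `x = y`, or `xy` is an edge and `c = d`. -/
def introGraph {V : Type*} [DecidableEq V] (G : SimpleGraph V) (k : ℕ) (T : Set V) (v : V) :
    SimpleGraph (IntroNode G k T v) where
  Adj p q := p ≠ q ∧ (p.1.1 = q.1.1 ∨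
      ((CSG (G.induce (delSet v)) k (Tdel T v)).Adj p.1.1 q.1.1 ∧ p.1.2 = q.1.2))
  symm := ⟨by
    rintro p q ⟨hne, h | ⟨h, e⟩⟩
    · exact ⟨hne.symm, Or.inl h.symm⟩
    · exact ⟨hne.symm, Or.inr ⟨h.symm, e.symm⟩⟩⟩
  loopless := ⟨fun p h => h.1 rfl⟩

/-!
Since every neighbour of `v` is a terminal, a `k`-coloring of `G` is the same as a
`k`-coloring `β` of `G - v` together with a color `c` for `v` such that the extension of the
label of `β` by `c` is a proper coloring of `G[T]`. A recoloring step of `G` that keeps the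
label on `T` never touches `v ∈ T`, so it is a label-preserving step of `G - v` at a fixed
color of `v`; conversely such a step of `G - v` lifts, because properness at `v` only depends
on the label. Hence the label components of `G` are exactly the pairs `(x, c)`, i.e. the
nodes `x_c`. An arbitrary step of `G` either recolors `v` (same `x`, different `c`) or a
vertex of `G - v` (same `c`, and `x`, `y` equal or adjacent), which gives the edges `x_c y_d`.
-/

section IntroduceRule

variable {V : Type} {G : SimpleGraph V} {k : ℕ} {T : Set V} {v : V}

abbrev sameLabelColorGraph {W : Type*} (G : SimpleGraph W) (k : ℕ) (T : Set W) :
    SimpleGraph {α : W → Fin k // IsColoring G k α} :=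
  sameLabelSub (colorGraph G k) (csgLabelFun G k T)

abbrev DelColoring (G : SimpleGraph V) (k : ℕ) (v : V) :=
  {α : delSet v → Fin k // IsColoring (G.induce (delSet v)) k α}

def CompatibleColor (β : DelColoring G k v) (c : Fin k) : Prop :=
  ∀ u (h : G.Adj v u), c ≠ β.1 ⟨u, h.ne'⟩

lemma compatibleColor_restrictColoring (γ : {α : V → Fin k // IsColoring G k α}) :
    CompatibleColor (restrictColoring G k (delSet v) γ) (γ.1 v) :=
  fun u h => γ.2 v u h

lemma CompatibleColor.of_csgLabelFun_eq (hN : ∀ u, G.Adj v u → u ∈ T)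
    {β β' : DelColoring G k v} {c : Fin k}
    (hl : csgLabelFun (G.induce (delSet v)) k (Tdel T v) β =
      csgLabelFun (G.induce (delSet v)) k (Tdel T v) β')
    (hc : CompatibleColor β c) : CompatibleColor β' c := by
  intro u hu
  rw [← show β.1 ⟨u, hu.ne'⟩ = β'.1 ⟨u, hu.ne'⟩ from congrFun hl ⟨⟨u, hu.ne'⟩, hN u hu⟩]
  exact hc u hu

lemma sameLabelColorGraph_adj_restrictColoring (hvT : v ∈ T)
    {a b : {α : V → Fin k // IsColoring G k α}} (h : (sameLabelColorGraph G k T).Adj a b) :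
    (sameLabelColorGraph (G.induce (delSet v)) k (Tdel T v)).Adj
      (restrictColoring G k (delSet v) a) (restrictColoring G k (delSet v) b) ∧ a.1 v = b.1 v := by
  obtain ⟨⟨w, hw, huniq⟩, hlab⟩ := h
  have hwT : w ∉ T := fun hwT => hw (congrFun hlab ⟨w, hwT⟩)
  have hwv : w ≠ v := fun e => hwT (e ▸ hvT)
  refine ⟨⟨⟨⟨w, hwv⟩, hw, fun u hu => Subtype.ext (huniq u.1 hu)⟩, ?_⟩, congrFun hlab ⟨v, hvT⟩⟩
  funext t
  exact congrFun hlab ⟨t.1.1, t.2⟩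

lemma csgNode_restrictColoring_eq_of_reachable (hvT : v ∈ T)
    {a b : {α : V → Fin k // IsColoring G k α}} (h : (sameLabelColorGraph G k T).Reachable a b) :
    csgNode (G.induce (delSet v)) k (Tdel T v) (restrictColoring G k (delSet v) a) =
      csgNode (G.induce (delSet v)) k (Tdel T v) (restrictColoring G k (delSet v) b) ∧
    a.1 v = b.1 v := by
  obtain ⟨p⟩ := h
  induction p with
  | nil => exact ⟨rfl, rfl⟩
  | cons hadj _ ih =>
    obtain ⟨hres, hv⟩ := sameLabelColorGraph_adj_restrictColoring hvT hadj
    exact ⟨(ConnectedComponent.sound hres.reachable).trans ih.1, hv.trans ih.2⟩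

variable [DecidableEq V]

def extendColoring (β : DelColoring G k v) (c : Fin k) (hc : CompatibleColor β c) :
    {α : V → Fin k // IsColoring G k α} :=
  ⟨fun u => if h : u = v then c else β.1 ⟨u, h⟩, by
    intro u w huw
    by_cases hu : u = v
    · subst hu
      simpa [huw.ne'] using hc w huw
    by_cases hw : w = v
    · subst hw
      simpa [hu] using (hc u huw.symm).symm
    simpa [hu, hw] using β.2 ⟨u, hu⟩ ⟨w, hw⟩ huw⟩

@[simp]
lemma extendColoring_apply_self (β : DelColoring G k v) (c : Fin k) (hc : CompatibleColor β c) :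
    (extendColoring β c hc).1 v = c :=
  dif_pos rfl

@[simp]
lemma restrictColoring_extendColoring (β : DelColoring G k v) (c : Fin k)
    (hc : CompatibleColor β c) :
    restrictColoring G k (delSet v) (extendColoring β c hc) = β := by
  ext u
  exact congrArg _ (dif_neg u.2)

lemma extendColoring_restrictColoring (γ : {α : V → Fin k // IsColoring G k α}) {c : Fin k}
    (hc : CompatibleColor (restrictColoring G k (delSet v) γ) c) (hcv : c = γ.1 v) :
    extendColoring (restrictColoring G k (delSet v) γ) c hc = γ := by
  ext u
  by_cases hu : u = v
  · subst hu
    simp [hcv]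
  · exact congrArg _ (dif_neg hu)

lemma csgLabelFun_extendColoring (β : DelColoring G k v) (c : Fin k)
    (hc : CompatibleColor β c) :
    csgLabelFun G k T (extendColoring β c hc) =
      extLabel T v c (csgLabelFun (G.induce (delSet v)) k (Tdel T v) β) :=
  rfl

lemma extLabel_csgLabelFun_restrictColoring (γ : {α : V → Fin k // IsColoring G k α}) :
    extLabel T v (γ.1 v)
        (csgLabelFun (G.induce (delSet v)) k (Tdel T v) (restrictColoring G k (delSet v) γ)) =
      csgLabelFun G k T γ := by
  rw [← csgLabelFun_extendColoring _ _ (compatibleColor_restrictColoring γ),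
    extendColoring_restrictColoring γ _ rfl]

lemma compatibleColor_of_isColoring_extLabel (hvT : v ∈ T) (hN : ∀ u, G.Adj v u → u ∈ T)
    {β : DelColoring G k v} {c : Fin k}
    (h : IsColoring (G.induce T) k
      (extLabel T v c (csgLabelFun (G.induce (delSet v)) k (Tdel T v) β))) :
    CompatibleColor β c := by
  intro u hu
  simpa [extLabel, csgLabelFun, hu.ne'] using h ⟨v, hvT⟩ ⟨u, hN u hu⟩ hu

lemma colorGraph_adj_extendColoring {β β' : DelColoring G k v} {c : Fin k}
    (hc : CompatibleColor β c) (hc' : CompatibleColor β' c)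
    (h : (colorGraph (G.induce (delSet v)) k).Adj β β') :
    (colorGraph G k).Adj (extendColoring β c hc) (extendColoring β' c hc') := by
  obtain ⟨w, hw, huniq⟩ := h
  refine ⟨w.1, by simpa [extendColoring, show (w : V) ≠ v from w.2] using hw, fun u hu => ?_⟩
  by_cases huv : u = v
  · subst huv
    simp at hu
  · have hu' : β.1 ⟨u, huv⟩ ≠ β'.1 ⟨u, huv⟩ := by simpa [extendColoring, huv] using hu
    exact congrArg Subtype.val (huniq ⟨u, huv⟩ hu')

lemma reachable_extendColoring (hN : ∀ u, G.Adj v u → u ∈ T) {β β' : DelColoring G k v}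
    {c : Fin k} (hc : CompatibleColor β c) (hc' : CompatibleColor β' c)
    (h : (sameLabelColorGraph (G.induce (delSet v)) k (Tdel T v)).Reachable β β') :
    (sameLabelColorGraph G k T).Reachable
      (extendColoring β c hc) (extendColoring β' c hc') := by
  obtain ⟨p⟩ := h
  induction p with
  | nil => rfl
  | cons hadj _ ih =>
    have hc₂ := hc.of_csgLabelFun_eq hN hadj.2
    refine SimpleGraph.Reachable.trans (SimpleGraph.Adj.reachable ⟨?_, ?_⟩) (ih hc₂ hc')
    · exact colorGraph_adj_extendColoring hc hc₂ hadj.1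
    · simp only [csgLabelFun_extendColoring, hadj.2]

lemma csgNode_eq_iff (hvT : v ∈ T) (hN : ∀ u, G.Adj v u → u ∈ T)
    {a b : {α : V → Fin k // IsColoring G k α}} :
    csgNode G k T a = csgNode G k T b ↔
      csgNode (G.induce (delSet v)) k (Tdel T v) (restrictColoring G k (delSet v) a) =
        csgNode (G.induce (delSet v)) k (Tdel T v) (restrictColoring G k (delSet v) b) ∧
      a.1 v = b.1 v := by
  refine ⟨fun h => csgNode_restrictColoring_eq_of_reachable hvT (ConnectedComponent.exact h),
    fun ⟨hres, hv⟩ => ?_⟩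
  have hreach := reachable_extendColoring hN (compatibleColor_restrictColoring a)
    (hv ▸ compatibleColor_restrictColoring b) (ConnectedComponent.exact hres)
  rw [extendColoring_restrictColoring a _ rfl, extendColoring_restrictColoring b _ hv] at hreach
  exact ConnectedComponent.sound hreach

lemma csgNode_extendColoring (hvT : v ∈ T) (hN : ∀ u, G.Adj v u → u ∈ T)
    {β : DelColoring G k v} {γ : {α : V → Fin k // IsColoring G k α}}
    (hβ : csgNode (G.induce (delSet v)) k (Tdel T v) β =
      csgNode (G.induce (delSet v)) k (Tdel T v) (restrictColoring G k (delSet v) γ))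
    {c : Fin k} (hc : CompatibleColor β c) (hcv : c = γ.1 v) :
    csgNode G k T (extendColoring β c hc) = csgNode G k T γ :=
  (csgNode_eq_iff hvT hN).2 ⟨by rwa [restrictColoring_extendColoring], by simpa using hcv⟩

lemma colorGraph_adj_extendColoring_restrictColoring (γ : {α : V → Fin k // IsColoring G k α})
    {c : Fin k} (hc : CompatibleColor (restrictColoring G k (delSet v) γ) c) (hcv : c ≠ γ.1 v) :
    (colorGraph G k).Adj γ (extendColoring (restrictColoring G k (delSet v) γ) c hc) := by
  refine ⟨v, by simpa using hcv.symm, fun u hu => ?_⟩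
  by_contra huv
  exact hu (by simp [extendColoring, huv, restrictColoring])

variable (T v) in
def introNodeOf (γ : {α : V → Fin k // IsColoring G k α}) : IntroNode G k T v :=
  ⟨(csgNode (G.induce (delSet v)) k (Tdel T v) (restrictColoring G k (delSet v) γ), γ.1 v), by
    show IsColoring (G.induce T) k (extLabel T v (γ.1 v)
      (csgLabelFun (G.induce (delSet v)) k (Tdel T v) (restrictColoring G k (delSet v) γ)))
    rw [extLabel_csgLabelFun_restrictColoring]
    exact fun u w h => γ.2 u.1 w.1 h⟩

lemma introNodeOf_eq_iff (hvT : v ∈ T) (hN : ∀ u, G.Adj v u → u ∈ T)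
    {a b : {α : V → Fin k // IsColoring G k α}} :
    introNodeOf T v a = introNodeOf T v b ↔ csgNode G k T a = csgNode G k T b := by
  rw [csgNode_eq_iff hvT hN]
  exact ⟨fun h => Prod.ext_iff.1 (congrArg Subtype.val h), fun h => Subtype.ext (Prod.ext h.1 h.2)⟩

def introNodeMap (hvT : v ∈ T) (hN : ∀ u, G.Adj v u → u ∈ T) :
    CSGNode G k T → IntroNode G k T v :=
  ConnectedComponent.lift (introNodeOf T v) fun _ _ p _ =>
    (introNodeOf_eq_iff hvT hN).2 (ConnectedComponent.sound p.reachable)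

lemma introNodeMap_injective (hvT : v ∈ T) (hN : ∀ u, G.Adj v u → u ∈ T) :
    Function.Injective (introNodeMap (k := k) hvT hN) := by
  intro C D h
  induction C using ConnectedComponent.ind with | _ a =>
  induction D using ConnectedComponent.ind with | _ b =>
  exact (introNodeOf_eq_iff hvT hN).1 h

lemma introNodeMap_surjective (hvT : v ∈ T) (hN : ∀ u, G.Adj v u → u ∈ T) :
    Function.Surjective (introNodeMap (k := k) hvT hN) := by
  rintro ⟨⟨x, c⟩, hp⟩
  induction x using ConnectedComponent.ind with | _ β =>
  have hc : CompatibleColor β c := compatibleColor_of_isColoring_extLabel hvT hN hp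
  exact ⟨csgNode G k T (extendColoring β c hc), Subtype.ext (Prod.ext
    (congrArg (csgNode _ k _) (restrictColoring_extendColoring β c hc))
    (extendColoring_apply_self β c hc))⟩

lemma csgLabel_eq_extLabel (hvT : v ∈ T) (hN : ∀ u, G.Adj v u → u ∈ T) (C : CSGNode G k T) :
    csgLabel G k T C = extLabel T v (introNodeMap hvT hN C).1.2
      (csgLabel (G.induce (delSet v)) k (Tdel T v) (introNodeMap hvT hN C).1.1) := by
  induction C using ConnectedComponent.ind with | _ a =>
  exact (extLabel_csgLabelFun_restrictColoring a).symm

lemma introGraph_adj_of_colorGraph_adj {a b : {α : V → Fin k // IsColoring G k α}}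
    (hab : (colorGraph G k).Adj a b) (hne : introNodeOf T v a ≠ introNodeOf T v b) :
    (introGraph G k T v).Adj (introNodeOf T v a) (introNodeOf T v b) := by
  obtain ⟨w, hw, huniq⟩ := hab
  refine ⟨hne, or_iff_not_imp_left.2 fun hx => ?_⟩
  have hwv : w ≠ v := by
    rintro rfl
    refine hx (congrArg (csgNode _ k _) (Subtype.ext (funext fun u => ?_)))
    by_contra hu
    exact u.2 (huniq u.1 hu)
  refine ⟨⟨hx, _, _, rfl, rfl, ⟨w, hwv⟩, hw, fun u hu => Subtype.ext (huniq u.1 hu)⟩, ?_⟩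
  by_contra hv
  exact hwv (huniq v hv).symm

lemma exists_colorGraph_adj_of_introGraph_adj (hvT : v ∈ T) (hN : ∀ u, G.Adj v u → u ∈ T)
    {a b : {α : V → Fin k // IsColoring G k α}}
    (h : (introGraph G k T v).Adj (introNodeOf T v a) (introNodeOf T v b)) :
    ∃ a' b', csgNode G k T a' = csgNode G k T a ∧ csgNode G k T b' = csgNode G k T b ∧
      (colorGraph G k).Adj a' b' := by
  obtain ⟨hne, hx | ⟨⟨-, β, β', hβ, hβ', hββ'⟩, hv⟩⟩ := h
  · have hb := (introNodeOf T v b).2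
    rw [← hx] at hb
    have hc := compatibleColor_of_isColoring_extLabel (β := restrictColoring G k (delSet v) a)
      hvT hN hb
    have hv : b.1 v ≠ a.1 v := fun hv => hne (Subtype.ext (Prod.ext hx hv.symm))
    exact ⟨a, _, rfl, csgNode_extendColoring hvT hN hx hc rfl,
      colorGraph_adj_extendColoring_restrictColoring a hc hv⟩
  · have hc := (compatibleColor_restrictColoring a).of_csgLabelFun_eq hN
      (congrArg (csgLabel _ k _) hβ).symm
    have hc' := (compatibleColor_restrictColoring b).of_csgLabelFun_eq hN
      (congrArg (csgLabel _ k _) hβ').symm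
    rw [← show a.1 v = b.1 v from hv] at hc'
    exact ⟨_, _, csgNode_extendColoring hvT hN hβ hc rfl, csgNode_extendColoring hvT hN hβ' hc' hv,
      colorGraph_adj_extendColoring hc hc' hββ'⟩

lemma introGraph_adj_introNodeMap_iff (hvT : v ∈ T) (hN : ∀ u, G.Adj v u → u ∈ T)
    (C D : CSGNode G k T) :
    (introGraph G k T v).Adj (introNodeMap hvT hN C) (introNodeMap hvT hN D) ↔
      (CSG G k T).Adj C D := by
  induction C using ConnectedComponent.ind with | _ a =>
  induction D using ConnectedComponent.ind with | _ b =>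
  refine ⟨fun h => ⟨fun hab => h.1 (congrArg _ hab),
    exists_colorGraph_adj_of_introGraph_adj hvT hN h⟩, ?_⟩
  rintro ⟨hne, a', b', ha, hb, hab⟩
  rw [← ha, ← hb] at hne ⊢
  exact introGraph_adj_of_colorGraph_adj hab fun h => hne (introNodeMap_injective hvT hN h)

end IntroduceRule

theorem statement_3_general {V : Type} [DecidableEq V]
    (G : SimpleGraph V) (k : ℕ) (T : Set V) (v : V)
    (hvT : v ∈ T) (hN : ∀ u : V, G.Adj v u → u ∈ T) :
    ∃ φ : introGraph G k T v ≃g CSG G k T,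
      (∀ p : IntroNode G k T v,
        csgLabel G k T (φ p) =
          extLabel T v p.1.2 (csgLabel (G.induce (delSet v)) k (Tdel T v) p.1.1)) ∧
      (∀ (γ : {f : V → Fin k // IsColoring G k f}) (p : IntroNode G k T v),
        p.1.1 = csgNode (G.induce (delSet v)) k (Tdel T v)
            (restrictColoring G k (delSet v) γ) →
        p.1.2 = γ.1 v → φ p = csgNode G k T γ) := by
  let e : CSG G k T ≃g introGraph G k T v :=
    ⟨.ofBijective _ ⟨introNodeMap_injective hvT hN, introNodeMap_surjective hvT hN⟩,
      introGraph_adj_introNodeMap_iff hvT hN _ _⟩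
  refine ⟨e.symm, fun p => ?_, fun γ p hx hc => ?_⟩
  · obtain ⟨C, rfl⟩ := e.surjective p
    rw [e.symm_apply_apply]
    exact csgLabel_eq_extLabel hvT hN C
  · rw [e.symm_apply_eq]
    exact Subtype.ext (Prod.ext hx hc)

/-- Introduce rule: if `(G,T)` is obtained from `(G-v, T \ {v})` by
introducing `v`, then the graph constructed in the introduce rule is (label-preserving
isomorphic to) `C^c_k(G,T)`, and the node `x_c` with `x` the node of the restriction
of `γ` and `c = γ(v)` corresponds to the `γ`-node. -/
theorem statement_3 {V : Type} [Fintype V] [DecidableEq V]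
    (G : SimpleGraph V) (k : ℕ) (hk : 1 ≤ k) (T : Set V) (v : V)
    (hvT : v ∈ T) (hTne : T ≠ Set.univ) (hN : ∀ u : V, G.Adj v u → u ∈ T) :
    ∃ φ : introGraph G k T v ≃g CSG G k T,
      (∀ p : IntroNode G k T v,
        csgLabel G k T (φ p) =
          extLabel T v p.1.2 (csgLabel (G.induce (delSet v)) k (Tdel T v) p.1.1)) ∧
      (∀ (γ : {f : V → Fin k // IsColoring G k f}) (p : IntroNode G k T v),
        p.1.1 = csgNode (G.induce (delSet v)) k (Tdel T v)
            (restrictColoring G k (delSet v) γ) →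
        p.1.2 = γ.1 v → φ p = csgNode G k T γ) :=
  statement_3_general G k T v hvT hN
end

section
/- Let G = (V,E) be a chordal graph and let T ⊆ V be a clique of G with T ≠ V, such that G−T is connected and every vertex of T has at least one neighbor in V∖T. Then there exists a vertex u ∈ V∖T that is adjacent to every vertex of T. -/
open SimpleGraph

/-! Choose `u ∉ T` with the most neighbours in `T`, and suppose some `t ∈ T` is not adjacent
to `u`. A shortest path from `u` to `t` whose vertices other than `t` lie outside `T` is an
induced path; let `w` be its vertex before `t`. Every neighbour `t'` of `u` in `T` is adjacent to
both ends of this path (as `T` is a clique), hence, by chordality, to all of its vertices: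
otherwise `t'` together with the stretch of the path between two consecutive neighbours of `t'`
would be an induced cycle of length at least 4. So `w` is adjacent to `t` and to every neighbour
of `u` in `T`, contradicting the choice of `u`. -/

namespace SimpleGraph

variable {V W : Type*} {G : SimpleGraph V}

def IsInducedPath (G : SimpleGraph V) (f : ℕ → V) (n : ℕ) : Prop :=
  Set.InjOn f (Set.Iic n) ∧ ∀ i ≤ n, ∀ j ≤ n, G.Adj (f i) (f j) ↔ j = i + 1 ∨ i = j + 1

namespace IsInducedPath

variable {f : ℕ → V} {n : ℕ}

lemma map {H : SimpleGraph W} (hf : G.IsInducedPath f n) (φ : G ↪g H) :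
    H.IsInducedPath (φ ∘ f) n :=
  ⟨φ.injective.comp_injOn hf.1, fun i hi j hj => φ.map_adj_iff.trans (hf.2 i hi j hj)⟩

lemma shift (hf : G.IsInducedPath f n) {i j : ℕ} (hij : i ≤ j) (hj : j ≤ n) :
    G.IsInducedPath (fun k => f (i + k)) (j - i) := by
  refine ⟨fun a ha b hb hab => ?_, fun a ha b hb => ?_⟩
  · rw [Set.mem_Iic] at ha hb
    have := hf.1 (Set.mem_Iic.mpr (by omega)) (Set.mem_Iic.mpr (by omega)) hab
    omega
  · rw [hf.2 (i + a) (by omega) (i + b) (by omega)]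
    omega

end IsInducedPath

lemma Walk.not_adj_getVert_of_length_eq_dist {u v : V} (p : G.Walk u v)
    (hp : p.length = G.dist u v) {i j : ℕ} (hij : i + 1 < j) (hj : j ≤ p.length) :
    ¬ G.Adj (p.getVert i) (p.getVert j) := by
  intro hadj
  have := dist_le ((p.take i).append (cons hadj (p.drop j)))
  simp only [length_append, take_length, length_cons, drop_length] at this
  omega

lemma Walk.isInducedPath_getVert_of_length_eq_dist {u v : V} (p : G.Walk u v)
    (hp : p.length = G.dist u v) : G.IsInducedPath p.getVert p.length := by
  refine ⟨(p.isPath_of_length_eq_dist hp).getVert_injOn, fun i hi j hj => ⟨fun hadj => ?_, ?_⟩⟩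
  · by_contra
    rcases lt_trichotomy i j with hij | rfl | hij
    · exact p.not_adj_getVert_of_length_eq_dist hp (by omega) hj hadj
    · exact hadj.ne rfl
    · exact p.not_adj_getVert_of_length_eq_dist hp (by omega) hi hadj.symm
  · rintro (rfl | rfl)
    · exact p.adj_getVert_succ (by omega)
    · exact (p.adj_getVert_succ (by omega)).symm

lemma exists_isInducedPath_of_reachable_induce {s : Set V} {u v : V} (hu : u ∈ s) (hv : v ∈ s)
    (h : (G.induce s).Reachable ⟨u, hu⟩ ⟨v, hv⟩) :
    ∃ f n, G.IsInducedPath f n ∧ f 0 = u ∧ f n = v ∧ ∀ i, f i ∈ s := by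
  obtain ⟨p, hp⟩ := h.exists_walk_length_eq_dist
  refine ⟨Embedding.induce s ∘ p.getVert, p.length,
    (p.isInducedPath_getVert_of_length_eq_dist hp).map _, ?_, ?_, fun i => (p.getVert i).2⟩
  · simp
  · simp

lemma cycleGraph_adj_iff_val {n : ℕ} {a b : Fin (n + 2)} :
    (cycleGraph (n + 2)).Adj a b ↔ a.val = b.val + 1 ∨ b.val = a.val + 1 ∨
      (a.val = 0 ∧ b.val = n + 1) ∨ (b.val = 0 ∧ a.val = n + 1) := by
  have ha := a.isLt
  have hb := b.isLt
  rw [cycleGraph_adj']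
  rcases lt_trichotomy a b with hab | rfl | hab
  · rw [Fin.coe_sub_iff_lt.mpr hab, Fin.coe_sub_iff_le.mpr hab.le]
    rw [Fin.lt_def] at hab
    omega
  · simp only [sub_self, Fin.val_zero]
    omega
  · rw [Fin.coe_sub_iff_le.mpr hab.le, Fin.coe_sub_iff_lt.mpr hab]
    rw [Fin.lt_def] at hab
    omega

lemma IsInducedPath.nonempty_cycleGraph_embedding {f : ℕ → V} {n : ℕ}
    (hf : G.IsInducedPath f n) {x : V} (hx : ∀ i ≤ n, x ≠ f i)
    (hxf : ∀ i ≤ n, G.Adj x (f i) ↔ i = 0 ∨ i = n) : Nonempty (cycleGraph (n + 2) ↪g G) := by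
  let c : Fin (n + 2) → V := fun a => if a.val = 0 then x else f (a.val - 1)
  have hc : ∀ a b, G.Adj (c a) (c b) ↔ (cycleGraph (n + 2)).Adj a b := by
    intro a b
    have ha := a.isLt
    have hb := b.isLt
    rw [cycleGraph_adj_iff_val]
    by_cases ha0 : a.val = 0 <;> by_cases hb0 : b.val = 0 <;>
      simp only [c, ha0, hb0, if_true, if_false, true_and, false_and, or_false, false_or]
    · simp only [SimpleGraph.irrefl, false_iff]
      omega
    · rw [hxf (b.val - 1) (by omega)]
      omega
    · rw [G.adj_comm, hxf (a.val - 1) (by omega)]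
      omega
    · rw [hf.2 (a.val - 1) (by omega) (b.val - 1) (by omega)]
      omega
  have hc_inj : Function.Injective c := by
    intro a b hab
    have ha := a.isLt
    have hb := b.isLt
    apply Fin.ext
    by_cases ha0 : a.val = 0 <;> by_cases hb0 : b.val = 0 <;>
      simp only [c, ha0, hb0, if_true, if_false] at hab
    · omega
    · exact absurd hab (hx _ (by omega))
    · exact absurd hab.symm (hx _ (by omega))
    · have := hf.1 (Set.mem_Iic.mpr (by omega)) (Set.mem_Iic.mpr (by omega)) hab
      omega
  exact ⟨⟨⟨c, hc_inj⟩, hc _ _⟩⟩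

end SimpleGraph

open SimpleGraph

namespace Chordal

variable {V : Type*} {G : SimpleGraph V} {f : ℕ → V} {n : ℕ}

theorem exists_adj_of_isInducedPath (hG : Chordal G) (hf : G.IsInducedPath f n) (hn : 2 ≤ n)
    {x : V} (hx : ∀ i ≤ n, x ≠ f i) (hx0 : G.Adj x (f 0)) (hxn : G.Adj x (f n)) :
    ∃ i, 0 < i ∧ i < n ∧ G.Adj x (f i) := by
  by_contra! hnone
  have hxf : ∀ i ≤ n, G.Adj x (f i) ↔ i = 0 ∨ i = n := fun i hi =>
    ⟨fun h => by by_contra! h'; exact hnone i (by omega) (by omega) h,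
      by rintro (rfl | rfl) <;> assumption⟩
  obtain ⟨e⟩ := hf.nonempty_cycleGraph_embedding hx hxf
  exact (hG (n + 2) (by omega)).false e

theorem adj_of_isInducedPath (hG : Chordal G) (hf : G.IsInducedPath f n) {x : V}
    (hx : ∀ i ≤ n, x ≠ f i) (hx0 : G.Adj x (f 0)) (hxn : G.Adj x (f n)) {k : ℕ} (hk : k ≤ n) :
    G.Adj x (f k) := by
  classical
  by_contra hxk
  -- `f i` and `f j` are the neighbours of `x` nearest to `f k` on either side.
  obtain ⟨i, hik, hi, hi_max⟩ :
      ∃ i ≤ k, G.Adj x (f i) ∧ ∀ l, i < l → l ≤ k → ¬ G.Adj x (f l) :=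
    ⟨_, Nat.findGreatest_le k, Nat.findGreatest_spec (P := fun i => G.Adj x (f i))
      (Nat.zero_le k) hx0, fun _ => Nat.findGreatest_is_greatest⟩
  have hex : ∃ j, k ≤ j ∧ G.Adj x (f j) := ⟨n, hk, hxn⟩
  obtain ⟨j, hkj, hjn, hj, hj_min⟩ : ∃ j, k ≤ j ∧ j ≤ n ∧ G.Adj x (f j) ∧
      ∀ l, k ≤ l → l < j → ¬ G.Adj x (f l) :=
    ⟨Nat.find hex, (Nat.find_spec hex).1, Nat.find_min' hex ⟨hk, hxn⟩, (Nat.find_spec hex).2,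
      fun _ hkl hlj hl => Nat.find_min hex hlj ⟨hkl, hl⟩⟩
  have hik' : i < k := lt_of_le_of_ne hik (by rintro rfl; exact hxk hi)
  have hkj' : k < j := lt_of_le_of_ne hkj (by rintro rfl; exact hxk hj)
  obtain ⟨l, hl0, hlj, hl⟩ := hG.exists_adj_of_isInducedPath
    (hf.shift (hik'.trans hkj').le hjn) (by omega) (fun l hl => hx _ (by omega))
    (by simpa using hi) (by simpa [Nat.add_sub_cancel' (hik'.trans hkj').le] using hj)
  rcases le_or_gt (i + l) k with hlk | hlk
  · exact hi_max _ (by omega) hlk hl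
  · exact hj_min _ hlk.le (by omega) hl

theorem insert_inter_neighborSet_subset (hG : Chordal G) {T : Set V} (hT : G.IsClique T)
    (hf : G.IsInducedPath f n) (hn : 0 < n) (hfT : ∀ i < n, f i ∉ T) (hfn : f n ∈ T)
    (hnadj : ¬ G.Adj (f 0) (f n)) :
    insert (f n) (T ∩ G.neighborSet (f 0)) ⊆ T ∩ G.neighborSet (f (n - 1)) := by
  rintro t (rfl | ⟨htT, ht⟩)
  · exact ⟨hfn, (hf.2 (n - 1) (by omega) n le_rfl).mpr (Or.inl (by omega))⟩
  · have htn : t ≠ f n := by rintro rfl; exact hnadj ht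
    have hx : ∀ i ≤ n, t ≠ f i := fun i hi => by
      rcases hi.lt_or_eq with hi | rfl
      · exact fun h => hfT i hi (h ▸ htT)
      · exact htn
    have := hG.adj_of_isInducedPath hf hx ht.symm (hT htT hfn htn) (Nat.sub_le n 1)
    exact ⟨htT, this.symm⟩

theorem exists_notMem_inter_neighborSet_ssubset (hG : Chordal G) {T : Set V}
    (hT : G.IsClique T) (hconn : (G.induce Tᶜ).Preconnected) {u t : V} (hu : u ∉ T)
    (ht : t ∈ T) (hut : ¬ G.Adj u t) (hnb : ∃ v ∉ T, G.Adj t v) :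
    ∃ w ∉ T, T ∩ G.neighborSet u ⊂ T ∩ G.neighborSet w := by
  obtain ⟨v, hv, htv⟩ := hnb
  have hreach : (G.induce (insert t Tᶜ)).Reachable ⟨u, Or.inr hu⟩ ⟨t, Or.inl rfl⟩ :=
    ((hconn ⟨u, hu⟩ ⟨v, hv⟩).map (induceHomOfLE G (Set.subset_insert t Tᶜ)).toHom).trans
      (Adj.reachable (G := G.induce (insert t Tᶜ)) (v := ⟨t, Or.inl rfl⟩) htv.symm)
  obtain ⟨f, n, hf, rfl, rfl, hfs⟩ := exists_isInducedPath_of_reachable_induce _ _ hreach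
  have hn : 0 < n := Nat.pos_of_ne_zero <| by rintro rfl; exact hu ht
  have hfT : ∀ i < n, f i ∉ T := fun i hi => by
    rcases hfs i with h | h
    · exact absurd (hf.1 (Set.mem_Iic.mpr hi.le) (Set.mem_Iic.mpr le_rfl) h) hi.ne
    · exact h
  exact ⟨f (n - 1), hfT _ (by omega), (Set.ssubset_insert fun h => hut h.2).trans_subset
    (hG.insert_inter_neighborSet_subset hT hf hn hfT ht hut)⟩

end Chordal

theorem statement_8_general {V : Type} [Fintype V] (G : SimpleGraph V)
    (hchord : Chordal G) (T : Set V) (hclique : G.IsClique T) (hTne : T ≠ Set.univ)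
    (hconn : (G.induce Tᶜ).Connected)
    (hnb : ∀ t ∈ T, ∃ u : V, u ∉ T ∧ G.Adj t u) :
    ∃ u : V, u ∉ T ∧ ∀ t ∈ T, G.Adj u t := by
  by_contra! hgoal
  obtain ⟨u, hu, hmax⟩ := Set.exists_max_image Tᶜ (fun v => (T ∩ G.neighborSet v).ncard)
    (Set.toFinite _) (Set.nonempty_compl.mpr hTne)
  obtain ⟨t, ht, hut⟩ := hgoal u hu
  obtain ⟨w, hw, hsub⟩ := hchord.exists_notMem_inter_neighborSet_ssubset hclique
    hconn.preconnected hu ht hut (hnb t ht)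
  exact (hmax w hw).not_gt (Set.ncard_lt_ncard hsub)

/-- if `G` is chordal, `T` is a clique with `T ≠ V(G)` such that `G − T`
is connected and every vertex of `T` has a neighbor outside `T`, then some vertex
outside `T` is adjacent to every vertex of `T`. -/
theorem statement_8 {V : Type} [Fintype V] [DecidableEq V] (G : SimpleGraph V)
    (hchord : Chordal G) (T : Set V) (hclique : G.IsClique T) (hTne : T ≠ Set.univ)
    (hconn : (G.induce Tᶜ).Connected)
    (hnb : ∀ t ∈ T, ∃ u : V, u ∉ T ∧ G.Adj t u) :
    ∃ u : V, u ∉ T ∧ ∀ t ∈ T, G.Adj u t :=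
  statement_8_general G hchord T hclique hTne hconn hnb
end
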